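/- arXiv:1908.02245 — 2 statements merged into one kernel-verified Lean document; each statement's English description precedes it below -/
import Mathlib

section
/- Let A, B, C be rings, let i^* : mod B → mod A, i_* : mod A → mod B, i^! : mod B → mod A be additive functors such that (i^*, i_*) and (i_*, i^!) are adjoint pairs and i_* is fully faithful, and let J : mod C → mod B be a fully faithful additive functor such that i^*(J(Y)) ≅ 0 and i^!(J(Y)) ≅ 0 for every Y in mod C. If 𝒮_L is a semibrick in mod A and 𝒮_R is a semibrick in mod C, then the union i_*(𝒮_L) ∪ J(𝒮_R) = {i_*(S) : S ∈ 𝒮_L} ∪ {J(S) : S ∈ 𝒮_R} is a semibrick in mod B. -/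
/-! The two semibricks stay semibricks under the fully faithful functors `i_*` and `J`, so only
morphisms between the two parts need checking. By adjunction, a morphism `i_* S ⟶ J T`
corresponds to one `S ⟶ i^! (J T) = 0`, and a morphism `J T ⟶ i_* S` to one
`i^* (J T) = 0 ⟶ S`; hence both vanish. -/

open CategoryTheory CategoryTheory.Limits

universe v u₁ u₂ u₃

/-- A module `S` is a *brick* if its endomorphism ring is a division ring, i.e.
it is nontrivial (`𝟙 S ≠ 0`) and every nonzero endomorphism is invertible. -/
def IsBrick {R : Type u₁} [Ring R] (S : ModuleCat.{v} R) : Prop :=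
  𝟙 S ≠ 0 ∧ ∀ f : S ⟶ S, f ≠ 0 → IsIso f

/-- A set of modules is a *semibrick* if every member is a brick and there is no nonzero
homomorphism between non-isomorphic members. -/
def IsSemibrick {R : Type u₁} [Ring R] (𝒮 : Set (ModuleCat.{v} R)) : Prop :=
  (∀ S ∈ 𝒮, IsBrick S) ∧
    ∀ S₁ ∈ 𝒮, ∀ S₂ ∈ 𝒮, ¬ Nonempty (S₁ ≅ S₂) → ∀ f : S₁ ⟶ S₂, f = 0

namespace CategoryTheory.Adjunction

variable {𝒞 : Type*} {𝒟 : Type*} [Category 𝒞] [Category 𝒟]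
  [HasZeroMorphisms 𝒞] [HasZeroMorphisms 𝒟] {F : 𝒞 ⥤ 𝒟} {G : 𝒟 ⥤ 𝒞}

theorem eq_zero_of_isZero_right_obj [F.PreservesZeroMorphisms] (adj : F ⊣ G) {X : 𝒞} {Y : 𝒟}
    (hY : IsZero (G.obj Y)) (f : F.obj X ⟶ Y) : f = 0 := by
  rw [← (adj.homEquiv X Y).symm_apply_apply f, homEquiv_counit,
    hY.eq_zero_of_tgt (adj.homEquiv X Y f), F.map_zero, zero_comp]

theorem eq_zero_of_isZero_left_obj [G.PreservesZeroMorphisms] (adj : F ⊣ G) {X : 𝒞} {Y : 𝒟}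
    (hX : IsZero (F.obj X)) (f : X ⟶ G.obj Y) : f = 0 := by
  rw [← (adj.homEquiv X Y).apply_symm_apply f, homEquiv_unit,
    hX.eq_zero_of_src ((adj.homEquiv X Y).symm f), G.map_zero, comp_zero]

end CategoryTheory.Adjunction

section FullyFaithful

variable {R₁ : Type u₁} {R₂ : Type u₂} [Ring R₁] [Ring R₂]
  (F : ModuleCat.{v} R₁ ⥤ ModuleCat.{v} R₂) [F.PreservesZeroMorphisms] [F.Full] [F.Faithful]

theorem IsBrick.map {S : ModuleCat.{v} R₁} (h : IsBrick S) : IsBrick (F.obj S) := by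
  refine ⟨fun h0 => h.1 (F.map_injective (by rw [F.map_id, F.map_zero, h0])), fun f hf => ?_⟩
  obtain ⟨g, rfl⟩ := F.map_surjective f
  have : IsIso g := h.2 g (by rintro rfl; exact hf (F.map_zero _ _))
  infer_instance

theorem IsSemibrick.image {𝒮 : Set (ModuleCat.{v} R₁)} (h : IsSemibrick 𝒮) :
    IsSemibrick (F.obj '' 𝒮) := by
  refine ⟨?_, ?_⟩
  · rintro _ ⟨S, hS, rfl⟩
    exact (h.1 S hS).map F
  · rintro _ ⟨S₁, hS₁, rfl⟩ _ ⟨S₂, hS₂, rfl⟩ hniso f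
    obtain ⟨g, rfl⟩ := F.map_surjective f
    rw [h.2 S₁ hS₁ S₂ hS₂ (fun ⟨e⟩ => hniso ⟨F.mapIso e⟩) g, F.map_zero]

end FullyFaithful

theorem IsSemibrick.union {R : Type u₁} [Ring R] {𝒮₁ 𝒮₂ : Set (ModuleCat.{v} R)}
    (h₁ : IsSemibrick 𝒮₁) (h₂ : IsSemibrick 𝒮₂)
    (h₁₂ : ∀ S₁ ∈ 𝒮₁, ∀ S₂ ∈ 𝒮₂, ∀ f : S₁ ⟶ S₂, f = 0)
    (h₂₁ : ∀ S₂ ∈ 𝒮₂, ∀ S₁ ∈ 𝒮₁, ∀ f : S₂ ⟶ S₁, f = 0) :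
    IsSemibrick (𝒮₁ ∪ 𝒮₂) := by
  refine ⟨fun S hS => hS.elim (h₁.1 S) (h₂.1 S), ?_⟩
  rintro S₁ (hS₁ | hS₁) S₂ (hS₂ | hS₂) hniso
  · exact h₁.2 S₁ hS₁ S₂ hS₂ hniso
  · exact h₁₂ S₁ hS₁ S₂ hS₂
  · exact h₂₁ S₁ hS₁ S₂ hS₂
  · exact h₂.2 S₁ hS₁ S₂ hS₂ hniso

theorem glued_semibrick_general {A : Type u₁} {B : Type u₂} {C : Type u₃}
    [Ring A] [Ring B] [Ring C]
    (iUpperStar : ModuleCat.{v} B ⥤ ModuleCat.{v} A)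
    (iStar : ModuleCat.{v} A ⥤ ModuleCat.{v} B)
    (iShriek : ModuleCat.{v} B ⥤ ModuleCat.{v} A)
    [iStar.Additive]
    [iStar.Full] [iStar.Faithful]
    (adj₁ : iUpperStar ⊣ iStar) (adj₂ : iStar ⊣ iShriek)
    (J : ModuleCat.{v} C ⥤ ModuleCat.{v} B) [J.Additive] [J.Full] [J.Faithful]
    (hJ₁ : ∀ Y : ModuleCat.{v} C, IsZero (iUpperStar.obj (J.obj Y)))
    (hJ₂ : ∀ Y : ModuleCat.{v} C, IsZero (iShriek.obj (J.obj Y)))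
    (𝒮L : Set (ModuleCat.{v} A)) (𝒮R : Set (ModuleCat.{v} C))
    (hL : IsSemibrick 𝒮L) (hR : IsSemibrick 𝒮R) :
    IsSemibrick (iStar.obj '' 𝒮L ∪ J.obj '' 𝒮R) := by
  refine (hL.image iStar).union (hR.image J) ?_ ?_
  · rintro _ ⟨S, -, rfl⟩ _ ⟨T, -, rfl⟩
    exact adj₂.eq_zero_of_isZero_right_obj (hJ₂ T)
  · rintro _ ⟨T, -, rfl⟩ _ ⟨S, -, rfl⟩
    exact adj₁.eq_zero_of_isZero_left_obj (hJ₁ T)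

/-- Gluing of semibricks: given adjoint pairs `(i^*, i_*)`, `(i_*, i^!)` with `i_*` fully
faithful, and a fully faithful functor `J : mod C → mod B` with `i^* ∘ J = 0` and
`i^! ∘ J = 0`, the union of the images of a semibrick of `mod A` under `i_*` and of a
semibrick of `mod C` under `J` is a semibrick of `mod B`. -/
theorem glued_semibrick {A : Type u₁} {B : Type u₂} {C : Type u₃}
    [Ring A] [Ring B] [Ring C]
    (iUpperStar : ModuleCat.{v} B ⥤ ModuleCat.{v} A)
    (iStar : ModuleCat.{v} A ⥤ ModuleCat.{v} B)
    (iShriek : ModuleCat.{v} B ⥤ ModuleCat.{v} A)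
    [iUpperStar.Additive] [iStar.Additive] [iShriek.Additive]
    [iStar.Full] [iStar.Faithful]
    (adj₁ : iUpperStar ⊣ iStar) (adj₂ : iStar ⊣ iShriek)
    (J : ModuleCat.{v} C ⥤ ModuleCat.{v} B) [J.Additive] [J.Full] [J.Faithful]
    (hJ₁ : ∀ Y : ModuleCat.{v} C, IsZero (iUpperStar.obj (J.obj Y)))
    (hJ₂ : ∀ Y : ModuleCat.{v} C, IsZero (iShriek.obj (J.obj Y)))
    (𝒮L : Set (ModuleCat.{v} A)) (𝒮R : Set (ModuleCat.{v} C))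
    (hL : IsSemibrick 𝒮L) (hR : IsSemibrick 𝒮R) :
    IsSemibrick (iStar.obj '' 𝒮L ∪ J.obj '' 𝒮R) :=
  glued_semibrick_general iUpperStar iStar iShriek adj₁ adj₂ J hJ₁ hJ₂ 𝒮L 𝒮R hL hR
end

section
/- Let A and B be rings and let F : mod A → mod B be a fully faithful additive functor. If there are only finitely many isomorphism classes of bricks in mod B, then there are only finitely many isomorphism classes of bricks in mod A. -/
open CategoryTheory CategoryTheory.Limits

universe v u₁ u₂

universe w

/-- `mod R` has only finitely many isomorphism classes of bricks: there is a finite list of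
bricks such that every brick is isomorphic to a member of the list. -/
def HasFinitelyManyBricks (R : Type u₁) [Ring R] : Prop :=
  ∃ L : List (ModuleCat.{v} R), (∀ S ∈ L, IsBrick S) ∧
    ∀ S : ModuleCat.{v} R, IsBrick S → ∃ T ∈ L, Nonempty (S ≅ T)

/-!
A fully faithful functor `F` identifies `End S` with `End (F S)` as rings, so it sends bricks to
bricks; and it reflects isomorphisms, so bricks with isomorphic images are isomorphic. Choosing,
for each brick `T` of the finite list for `B` that is isomorphic to some `F S`, one such brick `S`
therefore gives a finite list for `A`.
-/

theorem IsBrick.map_s9 {A : Type u₁} {B : Type u₂} [Ring A] [Ring B]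
    {F : ModuleCat.{v} A ⥤ ModuleCat.{w} B} [F.Full] [F.Faithful] {S : ModuleCat.{v} A}
    (hS : IsBrick S) : IsBrick (F.obj S) := by
  obtain ⟨hid, hiso⟩ := hS
  -- `F.map_eq_zero_iff` applies since a full functor preserves zero morphisms.
  refine ⟨by rwa [← F.map_id, Ne, F.map_eq_zero_iff], fun g hg => ?_⟩
  have : IsIso (F.preimage g) := hiso _ (by rwa [Ne, ← F.map_eq_zero_iff, F.map_preimage])
  rw [← F.map_preimage g]
  infer_instance

theorem CategoryTheory.Functor.exists_list_covering_of_map {C D : Type*} [Category C]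
    [Category D] (F : C ⥤ D) [F.Full] [F.Faithful] (P : C → Prop) (L : List D)
    (hL : ∀ X, P X → ∃ T ∈ L, Nonempty (F.obj X ≅ T)) :
    ∃ L' : List C, (∀ X ∈ L', P X) ∧ ∀ X, P X → ∃ Y ∈ L', Nonempty (X ≅ Y) := by
  classical
  let Lift (T : D) : Prop := ∃ X, P X ∧ Nonempty (F.obj X ≅ T)
  refine ⟨L.filterMap fun T => if h : Lift T then some h.choose else none, ?_, ?_⟩
  · intro X hX
    obtain ⟨T, -, hT⟩ := List.mem_filterMap.1 hX
    split_ifs at hT with h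
    exact Option.some_injective _ hT ▸ h.choose_spec.1
  · intro X hX
    obtain ⟨T, hT, ⟨e⟩⟩ := hL X hX
    have h : Lift T := ⟨X, hX, ⟨e⟩⟩
    obtain ⟨e'⟩ := h.choose_spec.2
    exact ⟨h.choose, List.mem_filterMap.2 ⟨T, hT, dif_pos h⟩, ⟨F.preimageIso (e ≪≫ e'.symm)⟩⟩

theorem finitelyManyBricks_of_fullyFaithful_general {A : Type u₁} {B : Type u₂} [Ring A] [Ring B]
    (F : ModuleCat.{v} A ⥤ ModuleCat.{v} B) [F.Full] [F.Faithful]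
    (hB : HasFinitelyManyBricks.{v} B) : HasFinitelyManyBricks.{v} A := by
  obtain ⟨L, -, hL⟩ := hB
  exact F.exists_list_covering_of_map IsBrick L fun S hS => hL _ hS.map_s9

/-- If there is a fully faithful additive functor `mod A → mod B` and `mod B` has only
finitely many isomorphism classes of bricks, then so does `mod A`. -/
theorem finitelyManyBricks_of_fullyFaithful {A : Type u₁} {B : Type u₂} [Ring A] [Ring B]
    (F : ModuleCat.{v} A ⥤ ModuleCat.{v} B) [F.Additive] [F.Full] [F.Faithful]
    (hB : HasFinitelyManyBricks.{v} B) : HasFinitelyManyBricks.{v} A :=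
  finitelyManyBricks_of_fullyFaithful_general F hB
end
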